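/- arXiv:1006.0543 — 4 statements merged into one kernel-verified Lean document; each statement's English description precedes it below -/
import Mathlib

section
/- If N is odd, then for ANY N distinct points z₁,…,z_N in ℂ there exists a nonzero strength vector Γ ∈ ℂ^N making the configuration a fixed equilibrium, i.e. ∑_{β≠α} Γ_β/(z_α − z_β) = 0 for every α = 1,…,N. -/
open Matrix BigOperators

noncomputable def configMatrix {N : ℕ} (z : Fin N → ℂ) : Matrix (Fin N) (Fin N) ℂ :=
  Matrix.of fun α β => if α = β then 0 else 1 / (z α - z β)

theorem Matrix.det_eq_zero_of_transpose_eq_neg {n R : Type*} [Fintype n] [DecidableEq n]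
    [CommRing R] [IsAddTorsionFree R] {A : Matrix n n R} (hA : Aᵀ = -A)
    (hn : Odd (Fintype.card n)) : A.det = 0 :=
  self_eq_neg.mp <| calc
    A.det = Aᵀ.det := (det_transpose A).symm
    _ = -A.det := by rw [hA, det_neg, hn.neg_one_pow, neg_one_mul]

theorem configMatrix_transpose {N : ℕ} (z : Fin N → ℂ) :
    (configMatrix z)ᵀ = -configMatrix z := by
  ext α β
  by_cases h : α = β
  · simp [configMatrix, h]
  · simp only [configMatrix, transpose_apply, Matrix.neg_apply, of_apply,
      if_neg h, if_neg (Ne.symm h)]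
    rw [← neg_sub (z α), div_neg]

theorem configMatrix_mulVec_apply {N : ℕ} (z Γ : Fin N → ℂ) (α : Fin N) :
    (configMatrix z *ᵥ Γ) α = ∑ β ∈ Finset.univ.erase α, Γ β / (z α - z β) := by
  rw [mulVec, dotProduct, ← Finset.add_sum_erase _ _ (Finset.mem_univ α)]
  simp only [configMatrix, of_apply, if_pos, zero_mul, zero_add]
  refine Finset.sum_congr rfl fun β hβ => ?_
  rw [if_neg (Finset.ne_of_mem_erase hβ).symm, one_div_mul_eq_div]

theorem exists_equilibrium_of_odd_general
    {N : ℕ} (hN : Odd N) (z : Fin N → ℂ) :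
    ∃ Γ : Fin N → ℂ, Γ ≠ 0 ∧
      ∀ α, ∑ β ∈ Finset.univ.erase α, Γ β / (z α - z β) = 0 := by
  have hdet : (configMatrix z).det = 0 :=
    det_eq_zero_of_transpose_eq_neg (configMatrix_transpose z) (by rwa [Fintype.card_fin])
  obtain ⟨Γ, hΓ, hAΓ⟩ := exists_mulVec_eq_zero_iff.mpr hdet
  exact ⟨Γ, hΓ, fun α => by rw [← configMatrix_mulVec_apply, hAΓ, Pi.zero_apply]⟩

/-- For an odd number of distinct points there always exists a nonzero strength
vector making the configuration a fixed equilibrium. -/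
theorem exists_equilibrium_of_odd
    {N : ℕ} (hN : Odd N) (z : Fin N → ℂ) (hz : Function.Injective z) :
    ∃ Γ : Fin N → ℂ, Γ ≠ 0 ∧
      ∀ α, ∑ β ∈ Finset.univ.erase α, Γ β / (z α - z β) = 0 :=
  exists_equilibrium_of_odd_general hN z
end

section
/- For any three distinct points z₁, z₂, z₃ ∈ ℂ, the characteristic polynomial of the 3×3 configuration matrix A is X³ + s·X, where s = 1/(z₁−z₂)² + 1/(z₂−z₃)² + 1/(z₁−z₃)². Consequently the eigenvalues of A are 0 and the pair ±λ with λ² = −s, and s is invariant under cyclic permutations of the indices. -/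
/-!
Since `1 / (z β - z α) = -(1 / (z α - z β))`, the configuration matrix of three points is
skew-symmetric, and a skew-symmetric `3 × 3` matrix with upper entries `a, c, b` has
characteristic polynomial `X³ + (a² + b² + c²) X`, whose roots are the eigenvalues.
-/

open Matrix BigOperators Polynomial

theorem Matrix.exists_mulVec_eq_smul_iff_isRoot_charpoly {R n : Type*} [CommRing R] [IsDomain R]
    [Fintype n] [DecidableEq n] (A : Matrix n n R) (μ : R) :
    (∃ v : n → R, v ≠ 0 ∧ A *ᵥ v = μ • v) ↔ A.charpoly.IsRoot μ := by
  rw [← charpoly_toLin', ← Module.End.hasEigenvalue_iff_isRoot_charpoly,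
    Module.End.hasEigenvalue_iff, Submodule.ne_bot_iff]
  simp only [Module.End.mem_eigenspace_iff, toLin'_apply]
  exact ⟨fun ⟨v, hv, h⟩ => ⟨v, h, hv⟩, fun ⟨v, h, hv⟩ => ⟨v, hv, h⟩⟩

theorem Matrix.charpoly_skew_fin_three {R : Type*} [CommRing R] (a b c : R) :
    !![0, a, c; -a, 0, b; -c, -b, 0].charpoly = X ^ 3 + C (a ^ 2 + b ^ 2 + c ^ 2) * X := by
  rw [charpoly, det_fin_three]
  simp
  ring

theorem isRoot_X_pow_three_add_C_mul_X_iff {K : Type*} [Field K] (s μ : K) :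
    (X ^ 3 + C s * X).IsRoot μ ↔ μ = 0 ∨ μ ^ 2 = -s := by
  have : (X ^ 3 + C s * X).eval μ = μ * (μ ^ 2 - -s) := by simp; ring
  rw [IsRoot, this, mul_eq_zero, sub_eq_zero]

theorem configMatrix_fin_three (z₁ z₂ z₃ : ℂ) :
    configMatrix ![z₁, z₂, z₃] =
      !![0, 1 / (z₁ - z₂), 1 / (z₁ - z₃);
        -(1 / (z₁ - z₂)), 0, 1 / (z₂ - z₃);
        -(1 / (z₁ - z₃)), -(1 / (z₂ - z₃)), 0] := by
  ext i j
  fin_cases i <;> fin_cases j <;> simp [configMatrix, ← inv_neg, neg_sub]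

theorem charpoly_configMatrix_three_general
    (z₁ z₂ z₃ : ℂ) :
    (configMatrix ![z₁, z₂, z₃]).charpoly =
        X ^ 3 + C (1 / (z₁ - z₂) ^ 2 + 1 / (z₂ - z₃) ^ 2 + 1 / (z₁ - z₃) ^ 2) * X ∧
    (∀ μ : ℂ, (∃ v : Fin 3 → ℂ, v ≠ 0 ∧ (configMatrix ![z₁, z₂, z₃]).mulVec v = μ • v) ↔
        (μ = 0 ∨ μ ^ 2 = -(1 / (z₁ - z₂) ^ 2 + 1 / (z₂ - z₃) ^ 2 + 1 / (z₁ - z₃) ^ 2))) ∧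
    (1 / (z₁ - z₂) ^ 2 + 1 / (z₂ - z₃) ^ 2 + 1 / (z₁ - z₃) ^ 2 =
        1 / (z₂ - z₃) ^ 2 + 1 / (z₃ - z₁) ^ 2 + 1 / (z₂ - z₁) ^ 2) := by
  have hcharpoly : (configMatrix ![z₁, z₂, z₃]).charpoly =
      X ^ 3 + C (1 / (z₁ - z₂) ^ 2 + 1 / (z₂ - z₃) ^ 2 + 1 / (z₁ - z₃) ^ 2) * X := by
    rw [configMatrix_fin_three, charpoly_skew_fin_three, div_pow, div_pow, div_pow, one_pow]
  refine ⟨hcharpoly, fun μ => ?_, ?_⟩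
  · rw [exists_mulVec_eq_smul_iff_isRoot_charpoly, hcharpoly, isRoot_X_pow_three_add_C_mul_X_iff]
  · rw [← neg_sub z₁ z₃, ← neg_sub z₁ z₂, neg_sq, neg_sq]
    ring

/-- For three distinct points the characteristic polynomial of the configuration
matrix is `X³ + s·X` with `s = 1/(z₁−z₂)² + 1/(z₂−z₃)² + 1/(z₁−z₃)²`; hence the
eigenvalues are `0` and the pair `±λ` with `λ² = −s`, and `s` is invariant
under cyclic permutation of the indices. -/
theorem charpoly_configMatrix_three
    (z₁ z₂ z₃ : ℂ) (h12 : z₁ ≠ z₂) (h23 : z₂ ≠ z₃) (h13 : z₁ ≠ z₃) :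
    (configMatrix ![z₁, z₂, z₃]).charpoly =
        X ^ 3 + C (1 / (z₁ - z₂) ^ 2 + 1 / (z₂ - z₃) ^ 2 + 1 / (z₁ - z₃) ^ 2) * X ∧
    (∀ μ : ℂ, (∃ v : Fin 3 → ℂ, v ≠ 0 ∧ (configMatrix ![z₁, z₂, z₃]).mulVec v = μ • v) ↔
        (μ = 0 ∨ μ ^ 2 = -(1 / (z₁ - z₂) ^ 2 + 1 / (z₂ - z₃) ^ 2 + 1 / (z₁ - z₃) ^ 2))) ∧
    (1 / (z₁ - z₂) ^ 2 + 1 / (z₂ - z₃) ^ 2 + 1 / (z₁ - z₃) ^ 2 =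
        1 / (z₂ - z₃) ^ 2 + 1 / (z₃ - z₁) ^ 2 + 1 / (z₂ - z₁) ^ 2) :=
  charpoly_configMatrix_three_general z₁ z₂ z₃
end

section
/- For any three distinct points z₁, z₂, z₃ ∈ ℂ, the vector Γ ∈ ℂ³ with components Γ_α = ∏_{β≠α} (z_α − z_β) is nonzero and lies in the kernel of the configuration matrix A, i.e. Γ is a strength vector making the three points a fixed equilibrium: ∑_{β≠α} Γ_β/(z_α − z_β) = 0 for α = 1, 2, 3. -/
/-!
Dividing `Γ β = ∏_{γ ≠ β} (z β - z γ)` by `z α - z β` cancels the factor `γ = α` up to sign,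
so `Γ β / (z α - z β) = -∏_{γ ≠ α, β} (z β - z γ)`. With three points the remaining product is
the single factor `z β - z γ`, and the two terms of the equilibrium sum at `α` are
`-(z β - z γ)` and `-(z γ - z β)`.
-/

open Matrix BigOperators Polynomial

open Finset

section

variable {ι K : Type*} [Fintype ι] [DecidableEq ι]

theorem prod_erase_sub_ne_zero [CommRing K] [IsDomain K] {z : ι → K}
    (hz : Function.Injective z) (α : ι) : ∏ β ∈ univ.erase α, (z α - z β) ≠ 0 :=
  prod_ne_zero_iff.mpr fun _ hβ => sub_ne_zero.mpr (hz.ne (ne_of_mem_erase hβ).symm)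

theorem prod_erase_sub_div_sub [Field K] (z : ι → K) {α β : ι} (h : z α ≠ z β) :
    (∏ γ ∈ univ.erase β, (z β - z γ)) / (z α - z β) =
      -∏ γ ∈ (univ.erase β).erase α, (z β - z γ) := by
  have hα : α ∈ univ.erase β := mem_erase.mpr ⟨fun hαβ => h (congrArg z hαβ), mem_univ α⟩
  rw [← mul_prod_erase _ _ hα, ← neg_sub (z α), neg_mul, neg_div,
    mul_div_cancel_left₀ _ (sub_ne_zero.mpr h)]

theorem sum_erase_prod_erase_erase_sub_eq_zero [CommRing K] (hι : Fintype.card ι = 3)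
    (z : ι → K) (α : ι) : ∑ β ∈ univ.erase α, ∏ γ ∈ (univ.erase β).erase α, (z β - z γ) = 0 := by
  obtain ⟨β, γ, hβγ, he⟩ := card_eq_two.mp (by rw [card_erase_of_mem (mem_univ α), card_univ, hι])
  have hβ : (univ.erase β).erase α = {γ} := by
    rw [erase_right_comm, he, erase_insert (notMem_singleton.mpr hβγ)]
  have hγ : (univ.erase γ).erase α = {β} := by
    rw [erase_right_comm, he, pair_comm, erase_insert (notMem_singleton.mpr hβγ.symm)]
  rw [he, sum_pair hβγ, hβ, hγ, prod_singleton, prod_singleton, ← neg_sub, neg_add_cancel]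

end

/-- For any three distinct points, `Γ α = ∏_{β ≠ α} (z α - z β)` is a nonzero
vector in the kernel of the configuration matrix, i.e. a strength vector making
the three points a fixed equilibrium. -/
theorem prod_strength_vector_in_kernel_three
    (z : Fin 3 → ℂ) (hz : Function.Injective z)
    (Γ : Fin 3 → ℂ) (hΓ : ∀ α, Γ α = ∏ β ∈ Finset.univ.erase α, (z α - z β)) :
    Γ ≠ 0 ∧ ∀ α, ∑ β ∈ Finset.univ.erase α, Γ β / (z α - z β) = 0 := by
  obtain rfl : Γ = fun α => ∏ β ∈ univ.erase α, (z α - z β) := funext hΓ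
  refine ⟨fun h => prod_erase_sub_ne_zero hz 0 (congrFun h 0), fun α => ?_⟩
  calc ∑ β ∈ univ.erase α, (∏ γ ∈ univ.erase β, (z β - z γ)) / (z α - z β)
      = -∑ β ∈ univ.erase α, ∏ γ ∈ (univ.erase β).erase α, (z β - z γ) := by
        rw [← sum_neg_distrib]
        exact sum_congr rfl fun β hβ => prod_erase_sub_div_sub z (hz.ne (ne_of_mem_erase hβ).symm)
    _ = 0 := by rw [sum_erase_prod_erase_erase_sub_eq_zero (Fintype.card_fin 3), neg_zero]
end

section
/- For three point vortices or three sources/sinks, the only fixed equilibria are collinear: let z₁, z₂, z₃ ∈ ℂ be distinct and let Γ ∈ ℂ³ be a nonzero strength vector with A·Γ = 0 whose components are either all real (point vortices) or all purely imaginary (sources/sinks). Then z₁, z₂, z₃ lie on a common line, i.e. (z₃ − z₁)/(z₂ − z₁) ∈ ℝ. -/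
open Matrix BigOperators Polynomial

/-!
The first row of `A Γ = 0` reads `Γ 1 / (z₁ - z₂) + Γ 2 / (z₁ - z₃) = 0`, that is
`(z₃ - z₁) / (z₂ - z₁) = -(Γ 2 / Γ 1)` as soon as `Γ 1 ≠ 0`; and `Γ 1 = 0` is impossible,
since the first row then forces `Γ 2 = 0` and the third row `Γ 0 = 0`.
A quotient of two real, or of two purely imaginary, numbers is real.
-/

theorem Complex.div_im_eq_zero_of_im_eq_zero {a b : ℂ} (ha : a.im = 0) (hb : b.im = 0) :
    (a / b).im = 0 := by
  simp [Complex.div_im, ha, hb]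

theorem Complex.div_im_eq_zero_of_re_eq_zero {a b : ℂ} (ha : a.re = 0) (hb : b.re = 0) :
    (a / b).im = 0 := by
  simp [Complex.div_im, ha, hb]

theorem configMatrix_three_mulVec (z₁ z₂ z₃ : ℂ) (Γ : Fin 3 → ℂ) :
    configMatrix ![z₁, z₂, z₃] *ᵥ Γ =
      ![Γ 1 / (z₁ - z₂) + Γ 2 / (z₁ - z₃),
        Γ 0 / (z₂ - z₁) + Γ 2 / (z₂ - z₃),
        Γ 0 / (z₃ - z₁) + Γ 1 / (z₃ - z₂)] := by
  ext α
  fin_cases α <;> simp [configMatrix, mulVec, dotProduct, Fin.sum_univ_three, div_eq_inv_mul]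

section ThreeEquilibrium

variable {z₁ z₂ z₃ : ℂ} {Γ : Fin 3 → ℂ}

theorem sub_div_sub_eq_neg_div_of_configMatrix_mulVec_eq_zero
    (h12 : z₁ ≠ z₂) (h13 : z₁ ≠ z₃) (hΓ1 : Γ 1 ≠ 0)
    (heq : configMatrix ![z₁, z₂, z₃] *ᵥ Γ = 0) :
    (z₃ - z₁) / (z₂ - z₁) = -(Γ 2 / Γ 1) := by
  have row₀ := congrFun heq 0
  simp only [configMatrix_three_mulVec, Matrix.cons_val_zero, Pi.zero_apply] at row₀
  have h12' : z₁ - z₂ ≠ 0 := sub_ne_zero.mpr h12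
  have h13' : z₁ - z₃ ≠ 0 := sub_ne_zero.mpr h13
  have h21' : z₂ - z₁ ≠ 0 := sub_ne_zero.mpr h12.symm
  field_simp at row₀ ⊢
  linear_combination -row₀

theorem apply_one_ne_zero_of_configMatrix_mulVec_eq_zero (h13 : z₁ ≠ z₃) (hΓ : Γ ≠ 0)
    (heq : configMatrix ![z₁, z₂, z₃] *ᵥ Γ = 0) :
    Γ 1 ≠ 0 := by
  intro hΓ1
  have hΓ2 : Γ 2 = 0 := by
    simpa [configMatrix_three_mulVec, hΓ1, sub_eq_zero, h13] using congrFun heq 0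
  have hΓ0 : Γ 0 = 0 := by
    simpa [configMatrix_three_mulVec, hΓ1, sub_eq_zero, h13.symm] using congrFun heq 2
  exact hΓ (by ext α; fin_cases α <;> assumption)

end ThreeEquilibrium

theorem three_equilibrium_real_or_imaginary_strengths_collinear_general
    (z₁ z₂ z₃ : ℂ) (h12 : z₁ ≠ z₂) (h13 : z₁ ≠ z₃)
    (Γ : Fin 3 → ℂ) (hΓ : Γ ≠ 0)
    (heq : (configMatrix ![z₁, z₂, z₃]).mulVec Γ = 0)
    (hri : (∀ α, (Γ α).im = 0) ∨ (∀ α, (Γ α).re = 0)) :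
    ((z₃ - z₁) / (z₂ - z₁)).im = 0 := by
  have hΓ1 := apply_one_ne_zero_of_configMatrix_mulVec_eq_zero h13 hΓ heq
  rw [sub_div_sub_eq_neg_div_of_configMatrix_mulVec_eq_zero h12 h13 hΓ1 heq, Complex.neg_im,
    neg_eq_zero]
  rcases hri with hreal | himag
  · exact Complex.div_im_eq_zero_of_im_eq_zero (hreal 2) (hreal 1)
  · exact Complex.div_im_eq_zero_of_re_eq_zero (himag 2) (himag 1)

/-- For three point vortices (all strengths real) or three sources/sinks (all
strengths purely imaginary), the only fixed equilibria are collinear. -/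
theorem three_equilibrium_real_or_imaginary_strengths_collinear
    (z₁ z₂ z₃ : ℂ) (h12 : z₁ ≠ z₂) (h23 : z₂ ≠ z₃) (h13 : z₁ ≠ z₃)
    (Γ : Fin 3 → ℂ) (hΓ : Γ ≠ 0)
    (heq : (configMatrix ![z₁, z₂, z₃]).mulVec Γ = 0)
    (hri : (∀ α, (Γ α).im = 0) ∨ (∀ α, (Γ α).re = 0)) :
    ((z₃ - z₁) / (z₂ - z₁)).im = 0 :=
  three_equilibrium_real_or_imaginary_strengths_collinear_general z₁ z₂ z₃ h12 h13 Γ hΓ heq hri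
end
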